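/- Let 0 < q₁ < p₁ ≤ 1, 0 < q₂ < p₂ ≤ 1 and let n, m ≥ 1 be natural numbers. Then for all (x,y) ∈ [0,1]², the bivariate (p,q)-Bernstein operator satisfies: B_{n,m}(1;x,y) = 1; B_{n,m}((s,t) ↦ s; x,y) = x; B_{n,m}((s,t) ↦ t; x,y) = y; B_{n,m}((s,t) ↦ st; x,y) = xy; B_{n,m}((s,t) ↦ s²; x,y) = (p₁^{n-1}/[n]_{p₁,q₁}) x + (q₁ [n-1]_{p₁,q₁}/[n]_{p₁,q₁}) x²; and B_{n,m}((s,t) ↦ t²; x,y) = (p₂^{m-1}/[m]_{p₂,q₂}) y + (q₂ [m-1]_{p₂,q₂}/[m]_{p₂,q₂}) y². -/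

import Mathlib

open Finset Set Filter Topology

/-- The (p,q)-integer `[n]_{p,q} = ∑_{i=0}^{n-1} p^(n-1-i) q^i`. -/
noncomputable def pqInt (p q : ℝ) (n : ℕ) : ℝ :=
  ∑ i ∈ Finset.range n, p ^ (n - 1 - i) * q ^ i

/-- The (p,q)-factorial `[n]_{p,q}! = ∏_{j=1}^n [j]_{p,q}`. -/
noncomputable def pqFactorial (p q : ℝ) (n : ℕ) : ℝ :=
  ∏ j ∈ Finset.range n, pqInt p q (j + 1)

/-- The (p,q)-binomial coefficient. -/
noncomputable def pqChoose (p q : ℝ) (n k : ℕ) : ℝ :=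
  pqFactorial p q n / (pqFactorial p q k * pqFactorial p q (n - k))

/-- The node `p^(n-k) [k]_{p,q} / [n]_{p,q}` of the (p,q)-Bernstein operator. -/
noncomputable def pqNode (p q : ℝ) (n k : ℕ) : ℝ :=
  p ^ (n - k) * pqInt p q k / pqInt p q n

/-- The basis function
`p^((k(k-1)-n(n-1))/2) C(n,k)_{p,q} x^k ∏_{s=0}^{n-k-1} (p^s - q^s x)`,
where `p^((k(k-1)-n(n-1))/2)` is written as `p^(k(k-1)/2) / p^(n(n-1)/2)`. -/
noncomputable def pqBasis (p q : ℝ) (n k : ℕ) (x : ℝ) : ℝ :=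
  (p ^ (k.choose 2) / p ^ (n.choose 2)) * pqChoose p q n k * x ^ k *
    ∏ s ∈ Finset.range (n - k), (p ^ s - q ^ s * x)

/-- The (p,q)-Bernstein operator `B_{n,p,q}(f;x)`. -/
noncomputable def pqBernstein (p q : ℝ) (n : ℕ) (f : ℝ → ℝ) (x : ℝ) : ℝ :=
  ∑ k ∈ Finset.range (n + 1), pqBasis p q n k x * f (pqNode p q n k)

/-- The bivariate (p,q)-Bernstein operator
`B_{n,m}^{(p₁,q₁),(p₂,q₂)}(f;x,y)`. -/
noncomputable def pqBernstein2 (p₁ q₁ p₂ q₂ : ℝ) (n m : ℕ)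
    (f : ℝ → ℝ → ℝ) (x y : ℝ) : ℝ :=
  ∑ k ∈ Finset.range (n + 1), ∑ j ∈ Finset.range (m + 1),
    pqBasis p₁ q₁ n k x * pqBasis p₂ q₂ m j y *
      f (pqNode p₁ q₁ n k) (pqNode p₂ q₂ m j)

/-!
On a product `g s * h t` the bivariate operator is the product of two univariate ones, so
everything reduces to the moments of order `0, 1, 2` of the univariate operator, with basis
`b n k` and nodes `ξ n k`.

The (p,q)-Pascal rule turns into the recurrence
`b (n+1) (k+1) = b n (k+1) - x (q/p)^(n-k-1) b n (k+1) + x (q/p)^(n-k) b n k`,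
whose correction terms telescope when summed over `k`; this gives `∑ k, b n k = 1` by induction.
The absorption identity `[k+1] C(n+1, k+1) = [n+1] C(n, k)` gives `b (n+1) (k+1) ξ (n+1) (k+1) = x b n k`,
hence the first moment, and with `[n+1] ξ (n+1) (k+1) = p^n + q [n] ξ n k` also the second.
-/

section Algebraic

variable (p q : ℝ)

lemma pqInt_zero : pqInt p q 0 = 0 := by simp [pqInt]

lemma pqInt_succ (n : ℕ) : pqInt p q (n + 1) = p ^ n + q * pqInt p q n := by
  rw [pqInt, sum_range_succ', pqInt, mul_sum, add_comm]
  congr 1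
  · simp
  · refine sum_congr rfl fun i _ => ?_
    rw [show n + 1 - 1 - (i + 1) = n - 1 - i by omega, pow_succ]
    ring

lemma pqInt_add (a b : ℕ) :
    pqInt p q (a + b) = p ^ a * pqInt p q b + q ^ b * pqInt p q a := by
  induction b with
  | zero => simp [pqInt_zero]
  | succ b ih =>
    rw [← add_assoc, pqInt_succ, ih, pqInt_succ, pow_add, pow_succ]
    ring

@[simp]
lemma pqFactorial_zero : pqFactorial p q 0 = 1 := prod_range_zero _

lemma pqFactorial_succ (n : ℕ) :
    pqFactorial p q (n + 1) = pqFactorial p q n * pqInt p q (n + 1) :=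
  prod_range_succ _ n

lemma pow_choose_two_succ (n : ℕ) : p ^ (n + 1).choose 2 = p ^ n.choose 2 * p ^ n := by
  rw [Nat.choose_succ_succ', Nat.choose_one_right, pow_add, mul_comm]

end Algebraic

section Positive

variable {p q : ℝ}

lemma pqInt_succ_pos (hp : 0 < p) (hq : 0 ≤ q) (n : ℕ) : 0 < pqInt p q (n + 1) := by
  induction n with
  | zero => simp [pqInt]
  | succ n ih => rw [pqInt_succ]; exact add_pos_of_pos_of_nonneg (pow_pos hp _) (by positivity)

lemma pqFactorial_pos (hp : 0 < p) (hq : 0 ≤ q) (n : ℕ) : 0 < pqFactorial p q n :=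
  prod_pos fun j _ => pqInt_succ_pos hp hq j

lemma pqChoose_zero_right (hp : 0 < p) (hq : 0 ≤ q) (n : ℕ) : pqChoose p q n 0 = 1 := by
  simp [pqChoose, (pqFactorial_pos hp hq n).ne']

lemma pqChoose_self (hp : 0 < p) (hq : 0 ≤ q) (n : ℕ) : pqChoose p q n n = 1 := by
  simp [pqChoose, (pqFactorial_pos hp hq n).ne']

lemma pqInt_succ_mul_pqChoose_succ_succ (hp : 0 < p) (hq : 0 ≤ q) (n k : ℕ) :
    pqInt p q (k + 1) * pqChoose p q (n + 1) (k + 1) = pqInt p q (n + 1) * pqChoose p q n k := by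
  have := (pqFactorial_pos hp hq (n - k)).ne'
  have := (pqFactorial_pos hp hq k).ne'
  have := (pqInt_succ_pos hp hq k).ne'
  rw [pqChoose, pqChoose, pqFactorial_succ, pqFactorial_succ, Nat.add_sub_add_right]
  field_simp

lemma pqChoose_succ_succ (hp : 0 < p) (hq : 0 ≤ q) {n k : ℕ} (hk : k < n) :
    pqChoose p q (n + 1) (k + 1) =
      p ^ (k + 1) * pqChoose p q n (k + 1) + q ^ (n - k) * pqChoose p q n k := by
  obtain ⟨d, rfl⟩ : ∃ d, n = k + 1 + d := ⟨n - (k + 1), by omega⟩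
  have := (pqFactorial_pos hp hq (k + 1 + d)).ne'
  have := (pqFactorial_pos hp hq k).ne'
  have := (pqFactorial_pos hp hq d).ne'
  have := (pqInt_succ_pos hp hq k).ne'
  have := (pqInt_succ_pos hp hq d).ne'
  rw [pqChoose, pqChoose, pqChoose, show k + 1 + d + 1 - (k + 1) = d + 1 by omega,
    show k + 1 + d - (k + 1) = d by omega, show k + 1 + d - k = d + 1 by omega,
    pqFactorial_succ _ _ (k + 1 + d), pqFactorial_succ _ _ k, pqFactorial_succ _ _ d,
    show k + 1 + d + 1 = (k + 1) + (d + 1) by omega, pqInt_add]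
  field_simp

end Positive

section Basis

variable {p q : ℝ}

lemma pqBasis_self (hp : 0 < p) (hq : 0 ≤ q) (n : ℕ) (x : ℝ) : pqBasis p q n n x = x ^ n := by
  simp [pqBasis, pqChoose_self hp hq, (pow_pos hp (n.choose 2)).ne']

lemma pqBasis_succ_zero (hp : 0 < p) (hq : 0 ≤ q) (n : ℕ) (x : ℝ) :
    pqBasis p q (n + 1) 0 x = pqBasis p q n 0 x - x * (q / p) ^ n * pqBasis p q n 0 x := by
  have := hp.ne'
  simp only [pqBasis, pqChoose_zero_right hp hq, Nat.sub_zero, prod_range_succ,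
    pow_choose_two_succ, div_pow]
  generalize ∏ s ∈ range n, (p ^ s - q ^ s * x) = P
  field_simp

lemma pqBasis_succ_succ (hp : 0 < p) (hq : 0 ≤ q) {n k : ℕ} (hk : k < n) (x : ℝ) :
    pqBasis p q (n + 1) (k + 1) x = pqBasis p q n (k + 1) x
      - x * (q / p) ^ (n - (k + 1)) * pqBasis p q n (k + 1) x
      + x * (q / p) ^ (n - k) * pqBasis p q n k x := by
  obtain ⟨d, rfl⟩ : ∃ d, n = k + 1 + d := ⟨n - (k + 1), by omega⟩
  have := hp.ne'
  rw [pqBasis, pqBasis, pqBasis, pqChoose_succ_succ hp hq hk,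
    show k + 1 + d + 1 - (k + 1) = d + 1 by omega, show k + 1 + d - (k + 1) = d by omega,
    show k + 1 + d - k = d + 1 by omega, prod_range_succ, pow_choose_two_succ,
    pow_choose_two_succ _ (k + 1 + d), div_pow, div_pow]
  generalize ∏ s ∈ range d, (p ^ s - q ^ s * x) = P
  field_simp
  ring

lemma sum_pqBasis (hp : 0 < p) (hq : 0 ≤ q) (n : ℕ) (x : ℝ) :
    ∑ k ∈ range (n + 1), pqBasis p q n k x = 1 := by
  induction n with
  | zero => simp [pqBasis_self hp hq]
  | succ n ih =>
    set c : ℕ → ℝ := fun j => x * (q / p) ^ (n - j) * pqBasis p q n j x with hc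
    calc ∑ k ∈ range (n + 1 + 1), pqBasis p q (n + 1) k x
        = ∑ k ∈ range n, pqBasis p q (n + 1) (k + 1) x + pqBasis p q (n + 1) (n + 1) x
            + pqBasis p q (n + 1) 0 x := by rw [sum_range_succ', sum_range_succ]
      _ = ∑ k ∈ range n, (pqBasis p q n (k + 1) x - c (k + 1) + c k) + c n
            + (pqBasis p q n 0 x - c 0) := by
        rw [sum_congr rfl fun k hk => pqBasis_succ_succ hp hq (mem_range.1 hk) x,
          pqBasis_succ_zero hp hq, pqBasis_self hp hq]
        simp only [hc, Nat.sub_self, Nat.sub_zero, pow_zero, mul_one, pqBasis_self hp hq]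
        ring
      _ = ∑ k ∈ range (n + 1), pqBasis p q n k x := by
        have telescope := sum_range_sub' c n
        rw [sum_sub_distrib] at telescope
        rw [sum_range_succ' _ n, sum_add_distrib, sum_sub_distrib]
        linarith
      _ = 1 := ih

end Basis

section Moments

variable {p q : ℝ}

lemma pqBasis_succ_succ_mul_pqNode (hp : 0 < p) (hq : 0 ≤ q) {n k : ℕ} (hk : k ≤ n) (x : ℝ) :
    pqBasis p q (n + 1) (k + 1) x * pqNode p q (n + 1) (k + 1) = x * pqBasis p q n k x := by
  have := hp.ne'
  have := (pqInt_succ_pos hp hq n).ne'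
  have absorb := pqInt_succ_mul_pqChoose_succ_succ hp hq n k
  have hpow : p ^ k * p ^ (n - k) = p ^ n := by rw [← pow_add, Nat.add_sub_cancel' hk]
  rw [pqBasis, pqBasis, pqNode, Nat.add_sub_add_right, pow_choose_two_succ,
    pow_choose_two_succ _ n]
  generalize ∏ s ∈ range (n - k), (p ^ s - q ^ s * x) = P
  field_simp
  linear_combination (p ^ k * x ^ (k + 1) * P * p ^ (n - k)) * absorb
    + (x ^ (k + 1) * P * pqInt p q (n + 1) * pqChoose p q n k) * hpow

lemma pqNode_succ_succ (hp : 0 < p) (hq : 0 ≤ q) {n k : ℕ} (hk : k ≤ n) :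
    pqNode p q (n + 1) (k + 1) = (p ^ n + q * pqInt p q n * pqNode p q n k) / pqInt p q (n + 1) := by
  rcases n with _ | n
  · obtain rfl : k = 0 := by omega
    simp [pqNode, pqInt]
  · have := (pqInt_succ_pos hp hq n).ne'
    have := (pqInt_succ_pos hp hq (n + 1)).ne'
    have hpow : p ^ (n + 1 - k) * p ^ k = p ^ (n + 1) := by rw [← pow_add, Nat.sub_add_cancel hk]
    rw [pqNode, pqNode, Nat.add_sub_add_right, pqInt_succ p q k]
    field_simp
    linear_combination hpow

theorem pqBernstein_one (hp : 0 < p) (hq : 0 ≤ q) (n : ℕ) (x : ℝ) :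
    pqBernstein p q n (fun _ => 1) x = 1 := by
  simpa [pqBernstein] using sum_pqBasis hp hq n x

theorem pqBernstein_id (hp : 0 < p) (hq : 0 ≤ q) {n : ℕ} (hn : n ≠ 0) (x : ℝ) :
    pqBernstein p q n (fun t => t) x = x := by
  obtain ⟨n, rfl⟩ := Nat.exists_eq_succ_of_ne_zero hn
  rw [pqBernstein, sum_range_succ',
    sum_congr rfl fun k hk => pqBasis_succ_succ_mul_pqNode hp hq (mem_range_succ_iff.1 hk) x,
    ← mul_sum, sum_pqBasis hp hq]
  simp [pqNode, pqInt_zero]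

theorem pqBernstein_sq (hp : 0 < p) (hq : 0 ≤ q) (n : ℕ) (x : ℝ) :
    pqBernstein p q n (fun t => t ^ 2) x =
      (p ^ (n - 1) / pqInt p q n) * x + (q * pqInt p q (n - 1) / pqInt p q n) * x ^ 2 := by
  rcases n with _ | n
  · -- both sides vanish: the node is `0 / 0` and the coefficients divide by `[0] = 0`
    simp [pqBernstein, pqNode, pqInt_zero]
  -- the first moment is not `x` at `n = 0`, but there it is multiplied by `[0] = 0`
  have hfirst : q * pqInt p q n * pqBernstein p q n (fun t => t) x = q * pqInt p q n * x := by
    rcases eq_or_ne n 0 with rfl | hn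
    · simp [pqInt_zero]
    · rw [pqBernstein_id hp hq hn]
  calc pqBernstein p q (n + 1) (fun t => t ^ 2) x
      = ∑ k ∈ range (n + 1), x * pqBasis p q n k x * pqNode p q (n + 1) (k + 1) := by
        rw [pqBernstein, sum_range_succ']
        simp only [sq, ← mul_assoc]
        rw [sum_congr rfl fun k hk =>
          by rw [pqBasis_succ_succ_mul_pqNode hp hq (mem_range_succ_iff.1 hk) x]]
        simp [pqNode, pqInt_zero]
    _ = x * (p ^ n * pqBernstein p q n (fun _ => 1) x
          + q * pqInt p q n * pqBernstein p q n (fun t => t) x) / pqInt p q (n + 1) := by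
        rw [pqBernstein, pqBernstein, mul_sum, mul_sum, ← sum_add_distrib, mul_sum, sum_div]
        refine sum_congr rfl fun k hk => ?_
        rw [pqNode_succ_succ hp hq (mem_range_succ_iff.1 hk)]
        ring
    _ = _ := by
        rw [pqBernstein_one hp hq, hfirst, Nat.add_sub_cancel]
        ring

end Moments

theorem pqBernstein2_eq_mul {p₁ q₁ p₂ q₂ : ℝ} {n m : ℕ} {f : ℝ → ℝ → ℝ} (g h : ℝ → ℝ)
    (hf : ∀ s t, f s t = g s * h t) (x y : ℝ) :
    pqBernstein2 p₁ q₁ p₂ q₂ n m f x y = pqBernstein p₁ q₁ n g x * pqBernstein p₂ q₂ m h y := by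
  rw [pqBernstein2, pqBernstein, pqBernstein, sum_mul_sum]
  exact sum_congr rfl fun k _ => sum_congr rfl fun j _ => by rw [hf]; ring

theorem pqBernstein2_moments_general (p₁ q₁ p₂ q₂ : ℝ) (n m : ℕ)
    (hq₁ : 0 < q₁) (hq₁p₁ : q₁ < p₁)
    (hq₂ : 0 < q₂) (hq₂p₂ : q₂ < p₂)
    (hn : 1 ≤ n) (hm : 1 ≤ m)
    (x y : ℝ) :
    pqBernstein2 p₁ q₁ p₂ q₂ n m (fun _ _ => 1) x y = 1 ∧
    pqBernstein2 p₁ q₁ p₂ q₂ n m (fun s _ => s) x y = x ∧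
    pqBernstein2 p₁ q₁ p₂ q₂ n m (fun _ t => t) x y = y ∧
    pqBernstein2 p₁ q₁ p₂ q₂ n m (fun s t => s * t) x y = x * y ∧
    pqBernstein2 p₁ q₁ p₂ q₂ n m (fun s _ => s ^ 2) x y =
      (p₁ ^ (n - 1) / pqInt p₁ q₁ n) * x +
      (q₁ * pqInt p₁ q₁ (n - 1) / pqInt p₁ q₁ n) * x ^ 2 ∧
    pqBernstein2 p₁ q₁ p₂ q₂ n m (fun _ t => t ^ 2) x y =
      (p₂ ^ (m - 1) / pqInt p₂ q₂ m) * y +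
      (q₂ * pqInt p₂ q₂ (m - 1) / pqInt p₂ q₂ m) * y ^ 2 := by
  have hp₁ := hq₁.trans hq₁p₁
  have hp₂ := hq₂.trans hq₂p₂
  have one₁ := pqBernstein_one hp₁ hq₁.le n x
  have one₂ := pqBernstein_one hp₂ hq₂.le m y
  have id₁ := pqBernstein_id hp₁ hq₁.le (by omega : n ≠ 0) x
  have id₂ := pqBernstein_id hp₂ hq₂.le (by omega : m ≠ 0) y
  refine ⟨?_, ?_, ?_, ?_, ?_, ?_⟩
  · rw [pqBernstein2_eq_mul _ _ fun _ _ => (mul_one 1).symm, one₁, one₂, mul_one]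
  · rw [pqBernstein2_eq_mul (fun s => s) _ fun s _ => (mul_one s).symm, id₁, one₂, mul_one]
  · rw [pqBernstein2_eq_mul _ (fun t => t) fun _ t => (one_mul t).symm, one₁, id₂, one_mul]
  · rw [pqBernstein2_eq_mul (fun s => s) (fun t => t) fun _ _ => rfl, id₁, id₂]
  · rw [pqBernstein2_eq_mul (fun s => s ^ 2) _ fun s _ => (mul_one _).symm, one₂, mul_one,
      pqBernstein_sq hp₁ hq₁.le]
  · rw [pqBernstein2_eq_mul _ (fun t => t ^ 2) fun _ t => (one_mul _).symm, one₁, one_mul,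
      pqBernstein_sq hp₂ hq₂.le]

theorem pqBernstein2_moments (p₁ q₁ p₂ q₂ : ℝ) (n m : ℕ)
    (hq₁ : 0 < q₁) (hq₁p₁ : q₁ < p₁) (hp₁ : p₁ ≤ 1)
    (hq₂ : 0 < q₂) (hq₂p₂ : q₂ < p₂) (hp₂ : p₂ ≤ 1)
    (hn : 1 ≤ n) (hm : 1 ≤ m)
    (x y : ℝ) (hx : x ∈ Set.Icc (0 : ℝ) 1) (hy : y ∈ Set.Icc (0 : ℝ) 1) :
    pqBernstein2 p₁ q₁ p₂ q₂ n m (fun _ _ => 1) x y = 1 ∧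
    pqBernstein2 p₁ q₁ p₂ q₂ n m (fun s _ => s) x y = x ∧
    pqBernstein2 p₁ q₁ p₂ q₂ n m (fun _ t => t) x y = y ∧
    pqBernstein2 p₁ q₁ p₂ q₂ n m (fun s t => s * t) x y = x * y ∧
    pqBernstein2 p₁ q₁ p₂ q₂ n m (fun s _ => s ^ 2) x y =
      (p₁ ^ (n - 1) / pqInt p₁ q₁ n) * x +
      (q₁ * pqInt p₁ q₁ (n - 1) / pqInt p₁ q₁ n) * x ^ 2 ∧
    pqBernstein2 p₁ q₁ p₂ q₂ n m (fun _ t => t ^ 2) x y =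
      (p₂ ^ (m - 1) / pqInt p₂ q₂ m) * y +
      (q₂ * pqInt p₂ q₂ (m - 1) / pqInt p₂ q₂ m) * y ^ 2 :=
  pqBernstein2_moments_general p₁ q₁ p₂ q₂ n m hq₁ hq₁p₁ hq₂ hq₂p₂ hn hm x y
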